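/- Let A₁, A₂ be real symmetric n×n matrices. Then max{xᵀA₁x, xᵀA₂x} ≥ 0 for all x ∈ ℝⁿ if and only if there exist t₁, t₂ ≥ 0 with t₁ + t₂ = 1 such that t₁A₁ + t₂A₂ is positive semidefinite. -/

import Mathlib

/-!
Write `Q_t = t • Q₁ + (1 - t) • Q₂` for `t ∈ [0, 1]`. If no `Q_t` is nonnegative, each `t` has a
direction `x` with `Q_t x < 0`, and then `Q₁ x < 0` or `Q₂ x < 0`. The parameters admitting such a
`Q₁`-negative direction and those admitting a `Q₂`-negative one are open, cover `[0, 1]` and contain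
`1` and `0` respectively, so by connectedness one `t` has both: `x` with `Q_t x, Q₁ x < 0` and `y`
with `Q_t y, Q₂ y < 0`. After replacing `y` by `-y` the polar term of `Q_t` at `(x, y)` is `≤ 0`,
so `Q_t` stays negative on the segment from `x` to `y`; connectedness of that segment then yields a
point where `Q₁` and `Q₂` are both negative, contradicting `max (Q₁ z) (Q₂ z) ≥ 0`.
-/

open Set

namespace QuadraticMap

variable {M : Type*} [AddCommGroup M] [Module ℝ M]

theorem apply_smul_add_smul (Q : QuadraticForm ℝ M) (a b : ℝ) (x y : M) :
    Q (a • x + b • y) = a * a * Q x + b * b * Q y + a * b * polar Q x y := by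
  simp only [QuadraticMap.map_add Q, QuadraticMap.map_smul, polar_smul_left, polar_smul_right,
    smul_eq_mul]
  ring

theorem continuous_apply_segment (Q : QuadraticForm ℝ M) (x y : M) :
    Continuous fun s : ℝ => Q ((1 - s) • x + s • y) := by
  simp only [apply_smul_add_smul]
  fun_prop

theorem apply_segment_neg_of_polar_nonpos {Q : QuadraticForm ℝ M} {x y : M} (hx : Q x < 0)
    (hy : Q y < 0) (hxy : polar Q x y ≤ 0) {s : ℝ} (hs : s ∈ Icc 0 1) :
    Q ((1 - s) • x + s • y) < 0 := by
  obtain ⟨hs₀, hs₁⟩ := hs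
  have hsq : (1 - s) * (1 - s) * Q x + s * s * Q y < 0 := by
    rcases hs₁.lt_or_eq with hs | rfl
    · nlinarith [mul_pos (sub_pos.2 hs) (sub_pos.2 hs), mul_nonneg hs₀ hs₀]
    · simpa using hy
  rw [apply_smul_add_smul]
  nlinarith [mul_nonneg (sub_nonneg.2 hs₁) hs₀]

variable {Q₁ Q₂ : QuadraticForm ℝ M}

theorem neg_or_neg_of_comb_neg {t : ℝ} (ht : t ∈ Icc 0 1) {x : M}
    (h : (t • Q₁ + (1 - t) • Q₂) x < 0) : Q₁ x < 0 ∨ Q₂ x < 0 := by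
  by_contra! h'
  simp only [add_apply, smul_apply, smul_eq_mul] at h
  nlinarith [ht.1, ht.2]

theorem exists_neg_neg_of_comb_neg {t : ℝ} (ht : t ∈ Icc 0 1) {x y : M}
    (hxt : (t • Q₁ + (1 - t) • Q₂) x < 0) (hx : Q₁ x < 0)
    (hyt : (t • Q₁ + (1 - t) • Q₂) y < 0) (hy : Q₂ y < 0) : ∃ z, Q₁ z < 0 ∧ Q₂ z < 0 := by
  set Q := t • Q₁ + (1 - t) • Q₂
  obtain ⟨w, hwt, hw, hxw⟩ : ∃ w, Q w < 0 ∧ Q₂ w < 0 ∧ polar Q x w ≤ 0 := by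
    rcases le_total (polar Q x y) 0 with hxy | hxy
    · exact ⟨y, hyt, hy, hxy⟩
    · refine ⟨-y, ?_, ?_, ?_⟩
      · rwa [QuadraticMap.map_neg]
      · rwa [QuadraticMap.map_neg]
      · rw [polar_neg_right]
        linarith
  obtain ⟨s, -, hs₁, hs₂⟩ := isPreconnected_Icc
    {s : ℝ | Q₁ ((1 - s) • x + s • w) < 0} {s | Q₂ ((1 - s) • x + s • w) < 0}
    (isOpen_lt (Q₁.continuous_apply_segment x w) continuous_const)
    (isOpen_lt (Q₂.continuous_apply_segment x w) continuous_const)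
    (fun s hs => neg_or_neg_of_comb_neg ht (apply_segment_neg_of_polar_nonpos hxt hwt hxw hs))
    ⟨0, left_mem_Icc.2 zero_le_one, by simpa⟩ ⟨1, right_mem_Icc.2 zero_le_one, by simpa⟩
  exact ⟨_, hs₁, hs₂⟩

theorem exists_comb_nonneg_of_max_nonneg (h : ∀ x, 0 ≤ max (Q₁ x) (Q₂ x)) :
    ∃ t ∈ Icc (0 : ℝ) 1, ∀ x, 0 ≤ (t • Q₁ + (1 - t) • Q₂) x := by
  by_contra! hneg
  let U (Q : QuadraticForm ℝ M) : Set ℝ :=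
    ⋃ x ∈ {x | Q x < 0}, {t | (t • Q₁ + (1 - t) • Q₂) x < 0}
  have hU (Q : QuadraticForm ℝ M) : IsOpen (U Q) :=
    isOpen_biUnion fun x _ =>
      isOpen_lt (by simp only [add_apply, smul_apply]; fun_prop) continuous_const
  have hcover : Icc 0 1 ⊆ U Q₁ ∪ U Q₂ := fun t ht => by
    obtain ⟨x, hx⟩ := hneg t ht
    exact (neg_or_neg_of_comb_neg ht hx).imp (mem_biUnion · hx) (mem_biUnion · hx)
  have hone : 1 ∈ U Q₁ := by
    obtain ⟨x, hx⟩ := hneg 1 (right_mem_Icc.2 zero_le_one)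
    exact mem_biUnion (by simpa using hx) hx
  have hzero : 0 ∈ U Q₂ := by
    obtain ⟨x, hx⟩ := hneg 0 (left_mem_Icc.2 zero_le_one)
    exact mem_biUnion (by simpa using hx) hx
  obtain ⟨t, ht, hx, hy⟩ := isPreconnected_Icc (U Q₁) (U Q₂) (hU Q₁) (hU Q₂) hcover
    ⟨1, right_mem_Icc.2 zero_le_one, hone⟩ ⟨0, left_mem_Icc.2 zero_le_one, hzero⟩
  simp only [U, mem_iUnion₂] at hx hy
  obtain ⟨x, hx, hxt⟩ := hx
  obtain ⟨y, hy, hyt⟩ := hy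
  obtain ⟨z, hz₁, hz₂⟩ := exists_neg_neg_of_comb_neg ht hxt hx hyt hy
  exact (h z).not_gt (max_lt hz₁ hz₂)

theorem forall_max_nonneg_iff :
    (∀ x, 0 ≤ max (Q₁ x) (Q₂ x)) ↔ ∃ t ∈ Icc (0 : ℝ) 1, ∀ x, 0 ≤ (t • Q₁ + (1 - t) • Q₂) x := by
  refine ⟨exists_comb_nonneg_of_max_nonneg, ?_⟩
  rintro ⟨t, ⟨ht₀, ht₁⟩, h⟩ x
  have hx := h x
  simp only [add_apply, smul_apply, smul_eq_mul] at hx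
  nlinarith [le_max_left (Q₁ x) (Q₂ x), le_max_right (Q₁ x) (Q₂ x)]

end QuadraticMap

open Matrix

theorem Matrix.toQuadraticForm'_apply {ι : Type*} [Fintype ι] [DecidableEq ι]
    (A : Matrix ι ι ℝ) (x : ι → ℝ) : A.toQuadraticForm' x = x ⬝ᵥ A *ᵥ x := by
  simp [Matrix.toQuadraticForm', toLinearMap₂'_apply']

theorem yuan_lemma (n : ℕ) (A₁ A₂ : Matrix (Fin n) (Fin n) ℝ)
    (h₁ : A₁.IsSymm) (h₂ : A₂.IsSymm) :
    (∀ x : Fin n → ℝ, 0 ≤ max (x ⬝ᵥ A₁ *ᵥ x) (x ⬝ᵥ A₂ *ᵥ x)) ↔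
    ∃ t₁ t₂ : ℝ, 0 ≤ t₁ ∧ 0 ≤ t₂ ∧ t₁ + t₂ = 1 ∧ (t₁ • A₁ + t₂ • A₂).PosSemidef := by
  have hcomb : ∀ (t₁ t₂ : ℝ) x, (t₁ • A₁.toQuadraticForm' + t₂ • A₂.toQuadraticForm') x =
      x ⬝ᵥ (t₁ • A₁ + t₂ • A₂) *ᵥ x := by
    intro t₁ t₂ x
    simp [toQuadraticForm'_apply, add_mulVec, smul_mulVec, dotProduct_add, dotProduct_smul]
  simp only [← toQuadraticForm'_apply, QuadraticMap.forall_max_nonneg_iff]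
  constructor
  · rintro ⟨t, ⟨ht₀, ht₁⟩, h⟩
    refine ⟨t, 1 - t, ht₀, sub_nonneg.2 ht₁, add_sub_cancel _ _, ?_⟩
    refine .of_dotProduct_mulVec_nonneg ?_ fun x => by simpa [← hcomb] using h x
    simpa using (h₁.smul t).add (h₂.smul (1 - t))
  · rintro ⟨t₁, t₂, ht₁, ht₂, hsum, hpsd⟩
    obtain rfl : t₂ = 1 - t₁ := by linarith
    exact ⟨t₁, ⟨ht₁, by linarith⟩, fun x => by simpa [hcomb] using hpsd.dotProduct_mulVec_nonneg x⟩
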